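/- Let Y ~ Bernoulli(p*) and suppose the policy reports a parsable clipped probability P ∈ [ε, 1-ε] with probability s, receiving logarithmic reward Y log P + (1-Y) log(1-P), and receives log ε when unparsable (probability 1-s). Then any maximizer of the expected reward has s = 1 and P almost surely equal to clip(p*, ε, 1-ε). -/

import Mathlib

open MeasureTheory ProbabilityTheory Real


private lemma stmt7_deriv (pstar : ℝ) (x : ℝ) (hx2 : x < 1) (hx0 : 0 < x) :
    HasDerivAt (fun p : ℝ => pstar * Real.log p + (1 - pstar) * Real.log (1 - p))
      ((pstar - x) / (x * (1 - x))) x := by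
  have h1 : HasDerivAt (fun p : ℝ => pstar * Real.log p) (pstar * x⁻¹) x :=
    (Real.hasDerivAt_log hx0.ne').const_mul pstar
  have h2 : HasDerivAt (fun p : ℝ => (1 - p)) (-1) x := by
    simpa using (hasDerivAt_id x).const_sub 1
  have h3 : HasDerivAt (fun p : ℝ => Real.log (1 - p)) ((1 - x)⁻¹ * (-1)) x :=
    (Real.hasDerivAt_log (by linarith)).comp x h2
  have h4 := h1.add (h3.const_mul (1 - pstar))
  have hx0' : x ≠ 0 := hx0.ne'
  have h1x : (1:ℝ) - x ≠ 0 := by linarith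
  have h4 : HasDerivAt (fun p : ℝ => pstar * Real.log p + (1 - pstar) * Real.log (1 - p))
      (pstar * x⁻¹ + (1 - pstar) * ((1 - x)⁻¹ * -1)) x := h4
  convert h4 using 1
  field_simp
  ring

private lemma stmt7_strict_max {pstar ε : ℝ} (hp : pstar ∈ Set.Icc (0:ℝ) 1)
    (hε : ε ∈ Set.Ioo (0:ℝ) (1/2)) {p : ℝ} (hpmem : p ∈ Set.Icc ε (1-ε))
    (hne : p ≠ min (max pstar ε) (1-ε)) :
    pstar * Real.log p + (1-pstar) * Real.log (1-p)
      < pstar * Real.log (min (max pstar ε) (1-ε))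
        + (1-pstar) * Real.log (1 - min (max pstar ε) (1-ε)) := by
  obtain ⟨hε0, hε2⟩ := hε
  set c := min (max pstar ε) (1-ε) with hc
  set f := fun p : ℝ => pstar * Real.log p + (1 - pstar) * Real.log (1 - p) with hf
  have hεlt : ε < 1 - ε := by linarith
  have hcmem : c ∈ Set.Icc ε (1-ε) :=
    ⟨le_min (le_max_right _ _) hεlt.le, min_le_right _ _⟩
  have hderiv : ∀ x ∈ Set.Icc ε (1-ε), HasDerivAt f ((pstar - x) / (x * (1 - x))) x := by
    intro x hx
    exact stmt7_deriv pstar x (by linarith [hx.2]) (lt_of_lt_of_le hε0 hx.1)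
  have hcont : ContinuousOn f (Set.Icc ε (1-ε)) := fun x hx =>
    ((hderiv x hx).differentiableAt.continuousAt).continuousWithinAt
  rcases lt_or_gt_of_ne hne with hlt | hgt
  · -- p < c : f strictly increasing on [ε, c]
    have hmono : StrictMonoOn f (Set.Icc ε c) := by
      apply strictMonoOn_of_deriv_pos (convex_Icc _ _)
      · exact hcont.mono (Set.Icc_subset_Icc le_rfl hcmem.2)
      · intro x hx
        rw [interior_Icc] at hx
        have hx' : x ∈ Set.Icc ε (1-ε) := ⟨hx.1.le, le_trans hx.2.le hcmem.2⟩
        rw [(hderiv x hx').deriv]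
        have hxp : x < pstar := by
          have := hx.2
          have hcle : c ≤ max pstar ε := min_le_left _ _
          rcases max_cases pstar ε with ⟨h1, h2⟩ | ⟨h1, h2⟩ <;> rw [h1] at hcle
          · linarith
          · linarith [hx.1]
        apply div_pos (by linarith)
        have : 0 < x := lt_trans hε0 hx.1
        nlinarith [hx'.2]
    exact hmono ⟨hpmem.1, hlt.le⟩ ⟨hcmem.1, le_rfl⟩ hlt
  · -- c < p : f strictly decreasing on [c, 1-ε]
    have hanti : StrictAntiOn f (Set.Icc c (1-ε)) := by
      apply strictAntiOn_of_deriv_neg (convex_Icc _ _)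
      · exact hcont.mono (Set.Icc_subset_Icc hcmem.1 le_rfl)
      · intro x hx
        rw [interior_Icc] at hx
        have hx' : x ∈ Set.Icc ε (1-ε) := ⟨le_trans hcmem.1 hx.1.le, hx.2.le⟩
        rw [(hderiv x hx').deriv]
        have hxp : pstar < x := by
          have h1 : c < 1 - ε := lt_trans hx.1 hx.2
          have h2 : c = max pstar ε := by
            rcases min_cases (max pstar ε) (1-ε) with ⟨h3, _⟩ | ⟨h3, h4⟩
            · exact h3
            · rw [hc] at h1; rw [h3] at h1; linarith
          have := le_max_left pstar ε
          rw [← h2] at this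
          linarith [hx.1]
        apply div_neg_of_neg_of_pos (by linarith)
        have : 0 < x := lt_of_lt_of_le hε0 hx'.1
        nlinarith [hx'.2]
    exact hanti ⟨le_rfl, hcmem.2⟩ ⟨hgt.le, hpmem.2⟩ hgt

/-- Let `Y ~ Bernoulli(p*)`. Suppose the policy reports a parsable clipped probability
`P ∈ [ε, 1-ε]` with probability `s` (receiving logarithmic reward
`Y log P + (1-Y) log(1-P)`, whose expectation over `Y` is
`p* log P + (1-p*) log(1-P)`), and receives `log ε` when unparsable (probability `1-s`).
Then any maximizer of the expected reward (over all `s' ∈ [0,1]` and all reports `P'`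
valued in `[ε, 1-ε]`) has `s = 1` and `P` almost surely equal to `clip(p*, ε, 1-ε)`. -/
theorem stmt7 {Ω : Type*} [MeasurableSpace Ω] (μ : Measure Ω) [IsProbabilityMeasure μ]
    (pstar ε : ℝ) (hpstar : pstar ∈ Set.Icc (0 : ℝ) 1) (hε : ε ∈ Set.Ioo (0 : ℝ) (1 / 2))
    (s : ℝ) (hs : s ∈ Set.Icc (0 : ℝ) 1)
    (P : Ω → ℝ) (hPmeas : Measurable P) (hPrange : ∀ ω, P ω ∈ Set.Icc ε (1 - ε))
    (hmax : ∀ s' ∈ Set.Icc (0 : ℝ) 1, ∀ P' : Ω → ℝ, Measurable P' →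
      (∀ ω, P' ω ∈ Set.Icc ε (1 - ε)) →
      s' * (∫ ω, (pstar * Real.log (P' ω) + (1 - pstar) * Real.log (1 - P' ω)) ∂μ) +
          (1 - s') * Real.log ε ≤
        s * (∫ ω, (pstar * Real.log (P ω) + (1 - pstar) * Real.log (1 - P ω)) ∂μ) +
          (1 - s) * Real.log ε) :
    s = 1 ∧ P =ᵐ[μ] fun _ => min (max pstar ε) (1 - ε) := by
  obtain ⟨hε0, hε2⟩ := hε
  obtain ⟨hp0, hp1⟩ := hpstar
  set c := min (max pstar ε) (1 - ε) with hc
  have hεlt : ε < 1 - ε := by linarith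
  have hcmem : c ∈ Set.Icc ε (1-ε) := ⟨le_min (le_max_right _ _) hεlt.le, min_le_right _ _⟩
  set f := fun p : ℝ => pstar * Real.log p + (1 - pstar) * Real.log (1 - p) with hf
  have hmaxf : ∀ p ∈ Set.Icc ε (1-ε), f p ≤ f c := by
    intro p hp
    by_cases h : p = c
    · rw [h]
    · exact (stmt7_strict_max ⟨hp0, hp1⟩ ⟨hε0, hε2⟩ hp h).le
  have hlogε : Real.log ε < 0 := Real.log_neg hε0 (by linarith)
  have hlb : ∀ p ∈ Set.Icc ε (1-ε), Real.log ε ≤ f p := by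
    intro p hp
    have h1 : Real.log ε ≤ Real.log p := Real.log_le_log hε0 hp.1
    have h2 : Real.log ε ≤ Real.log (1-p) := Real.log_le_log hε0 (by linarith [hp.2])
    show Real.log ε ≤ pstar * Real.log p + (1 - pstar) * Real.log (1 - p)
    nlinarith
  have hub : ∀ p ∈ Set.Icc ε (1-ε), f p ≤ 0 := by
    intro p hp
    have h1 : Real.log p ≤ 0 := Real.log_nonpos (by linarith [hp.1]) (by linarith [hp.2])
    have h2 : Real.log (1-p) ≤ 0 := Real.log_nonpos (by linarith [hp.2]) (by linarith [hp.1])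
    show pstar * Real.log p + (1 - pstar) * Real.log (1 - p) ≤ 0
    nlinarith
  -- integrability
  have hgmeas : Measurable (fun ω => f (P ω)) := by
    apply Measurable.add
    · exact (hPmeas.log).const_mul pstar
    · exact ((measurable_const.sub hPmeas).log).const_mul (1 - pstar)
  have hint : Integrable (fun ω => f (P ω)) μ := by
    apply Integrable.mono' (integrable_const (-Real.log ε)) hgmeas.aestronglyMeasurable
    filter_upwards with ω
    rw [Real.norm_eq_abs, abs_le]
    constructor
    · linarith [hlb _ (hPrange ω)]
    · linarith [hub _ (hPrange ω), hlb _ (hPrange ω)]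
  set I := ∫ ω, f (P ω) ∂μ with hI
  have hIle : I ≤ f c := by
    calc I ≤ ∫ _ω, f c ∂μ := by
          apply integral_mono hint (integrable_const _)
          intro ω; exact hmaxf _ (hPrange ω)
      _ = f c := by simp
  -- f c > log ε
  have hfc : Real.log ε < f c := by
    by_cases hce : c = ε
    · have hpε : pstar ≤ ε := by
        by_contra h
        push_neg at h
        have : c = min pstar (1-ε) := by rw [hc, max_eq_left h.le]
        rcases min_cases pstar (1-ε) with ⟨h1, h2⟩ | ⟨h1, h2⟩ <;> rw [this, h1] at hce <;> linarith
      have h1 : Real.log ε < Real.log (1-ε) := Real.log_lt_log hε0 hεlt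
      have h2 : f c = pstar * Real.log ε + (1-pstar) * Real.log (1-ε) := by
        rw [hf]; simp only []; rw [hce]
      rw [h2]
      nlinarith
    · have hcε : ε < c := lt_of_le_of_ne hcmem.1 (Ne.symm hce)
      have hppos : 0 < pstar := by
        by_contra h
        push_neg at h
        have hpz : pstar = 0 := le_antisymm h hp0
        apply hce
        rw [hc, hpz, max_eq_right hε0.le, min_eq_left hεlt.le]
      have h1 : Real.log ε < Real.log c := Real.log_lt_log hε0 hcε
      have h2 : Real.log ε ≤ Real.log (1-c) := Real.log_le_log hε0 (by linarith [hcmem.2])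
      rw [hf]; simp only []
      nlinarith
  -- apply maximality with s' = 1, P' = const c
  have h1 := hmax 1 ⟨zero_le_one, le_rfl⟩ (fun _ => c) measurable_const (fun _ => hcmem)
  simp only [one_mul, sub_self, zero_mul, add_zero] at h1
  rw [integral_const] at h1
  simp only [measure_univ, ENNReal.toReal_one, probReal_univ, one_smul] at h1
  have h1' : f c ≤ s * I + (1-s) * Real.log ε := h1
  have hseq : s = 1 := by
    by_contra hsne
    have hslt : s < 1 := lt_of_le_of_ne hs.2 hsne
    nlinarith [hs.1, hIle, hfc]
  refine ⟨hseq, ?_⟩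
  rw [hseq] at h1'
  simp only [one_mul, sub_self, zero_mul, add_zero] at h1'
  have hIeq : I = f c := le_antisymm hIle h1'
  have hzero : ∫ ω, (f c - f (P ω)) ∂μ = 0 := by
    rw [integral_sub (integrable_const _) hint]
    simp [← hI, hIeq]
  have hnonneg : 0 ≤ᵐ[μ] fun ω => f c - f (P ω) :=
    Filter.Eventually.of_forall fun ω => by
      simp only [Pi.zero_apply]
      linarith [hmaxf _ (hPrange ω)]
  have hae := (integral_eq_zero_iff_of_nonneg_ae hnonneg
    ((integrable_const _).sub hint)).mp hzero
  filter_upwards [hae] with ω hω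
  by_contra hne
  have := stmt7_strict_max ⟨hp0, hp1⟩ ⟨hε0, hε2⟩ (hPrange ω) hne
  have hω' : f c - f (P ω) = 0 := hω
  rw [← hc] at this
  simp only [hf] at hω'
  change pstar * Real.log c + (1 - pstar) * Real.log (1 - c)
    - (pstar * Real.log (P ω) + (1 - pstar) * Real.log (1 - P ω)) = 0 at hω'
  linarith
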